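/- arXiv:2408.06263 — 3 statements merged into one kernel-verified Lean document; each statement's English description precedes it below -/
import Mathlib

section
/- For every λ ≥ 0 and every constant a > 2, the SCAD thresholding function defined by T_λ(x) = sign(x)·max(|x| − λ, 0) if |x| ≤ 2λ, T_λ(x) = ((a − 1)x − sign(x)·aλ)/(a − 2) if 2λ < |x| ≤ aλ, and T_λ(x) = x if |x| > aλ, satisfies the univariate thresholding conditions: T_λ(x) = 0 whenever |x| ≤ λ, and |T_λ(x) − x| ≤ λ for all x ∈ ℝ. -/
lemma sign_mul_abs' (x : ℝ) : Real.sign x * |x| = x := by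
  rcases lt_trichotomy x 0 with h | h | h
  · rw [Real.sign_of_neg h, abs_of_neg h]; ring
  · simp [h]
  · rw [Real.sign_of_pos h, abs_of_pos h, one_mul]

lemma abs_sign_le_one (x : ℝ) : |Real.sign x| ≤ 1 := by
  rcases lt_trichotomy x 0 with h | h | h
  · rw [Real.sign_of_neg h]; norm_num
  · rw [h, Real.sign_zero]; norm_num
  · rw [Real.sign_of_pos h]; norm_num

/-- SCAD thresholding (with parameter `a > 2`) satisfies the univariate
thresholding conditions. -/
theorem stmt_8 (lam : ℝ) (hlam : 0 ≤ lam) (a : ℝ) (ha : 2 < a) :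
    let T : ℝ → ℝ := fun x =>
      if |x| ≤ 2 * lam then Real.sign x * max (|x| - lam) 0
      else if |x| ≤ a * lam then ((a - 1) * x - Real.sign x * (a * lam)) / (a - 2)
      else x
    (∀ x, |x| ≤ lam → T x = 0) ∧ (∀ x, |T x - x| ≤ lam) := by
  intro T
  constructor
  · intro x hx
    have h1 : |x| ≤ 2 * lam := by linarith
    simp only [T, if_pos h1]
    rw [max_eq_right (by linarith), mul_zero]
  · intro x
    have ha2 : (0:ℝ) < a - 2 := by linarith
    by_cases h1 : |x| ≤ 2 * lam
    · simp only [T, if_pos h1]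
      by_cases h2 : |x| ≤ lam
      · rw [max_eq_right (by linarith), mul_zero, zero_sub, abs_neg]; exact h2
      · push_neg at h2
        rw [max_eq_left (by linarith)]
        have hs : Real.sign x * |x| = x := sign_mul_abs' x
        have heq : Real.sign x * (|x| - lam) - x = -(Real.sign x * lam) := by
          rw [mul_sub, hs]; ring
        rw [heq, abs_neg, abs_mul]
        calc |Real.sign x| * |lam| ≤ 1 * |lam| := by
              apply mul_le_mul_of_nonneg_right (abs_sign_le_one x) (abs_nonneg _)
          _ = lam := by rw [one_mul, abs_of_nonneg hlam]
    · push_neg at h1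
      by_cases h2 : |x| ≤ a * lam
      · simp only [T, if_neg (not_le.mpr h1), if_pos h2]
        have hx0 : x ≠ 0 := by
          intro h; rw [h, abs_zero] at h1; linarith
        have hs : Real.sign x * |x| = x := sign_mul_abs' x
        have hs1 : |Real.sign x| = 1 := by
          rcases hx0.lt_or_gt with h | h
          · rw [Real.sign_of_neg h]; norm_num
          · rw [Real.sign_of_pos h]; norm_num
        have heq : ((a - 1) * x - Real.sign x * (a * lam)) / (a - 2) - x
            = Real.sign x * (|x| - a * lam) / (a - 2) := by
          rw [mul_sub, hs]; field_simp; ring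
        rw [heq, abs_div, abs_mul, hs1, one_mul, abs_of_pos ha2,
          div_le_iff₀ ha2, abs_of_nonpos (by linarith)]
        linarith
      · simp only [T, if_neg (not_le.mpr h1), if_neg h2, sub_self, abs_zero]
        exact hlam
end

section
/- Let Ω^{(1)},…,Ω^{(M)} be real p×p matrices, n_1,…,n_M > 0 with N = Σ_m n_m, Γ = (1/N)Σ_m n_m Ω^{(m)} and Λ^{(m)} = Ω^{(m)} − Γ. For each column k, let S_{1,k} = {j : Ω^{(1)}_{j,k} = ⋯ = Ω^{(M)}_{j,k} ≠ 0} and S_{2,k} = {j : not all of Ω^{(1)}_{j,k},…,Ω^{(M)}_{j,k} are equal}, and assume |S_{1,k}| ≤ s_1 and |S_{2,k}| ≤ s_2 for all k. Let Ω̄^{(1)},…,Ω̄^{(M)} be arbitrary real p×p matrices and Ω̄ = (1/N)Σ_m n_m Ω̄^{(m)}. Let λ_1, λ_2 ≥ 0 and suppose that for all j,k: |Ω̄_{j,k} − Γ_{j,k}| ≤ λ_1 and ‖Ω̄^{(·)}_{j,k} − Ω̄_{j,k}·1_M − Λ^{(·)}_{j,k}‖_{2,w} ≤ λ_2. Let T_{1,λ_1}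 : ℝ → ℝ satisfy the univariate thresholding conditions and T_{2,λ_2} : ℝ^M → ℝ^M satisfy the multivariate thresholding conditions with respect to ‖·‖_{2,w}, and define Ω̃^{(m)}_{j,k} = T_{1,λ_1}(Ω̄_{j,k}) + (T_{2,λ_2}(Ω̄^{(·)}_{j,k} − Ω̄_{j,k}·1_M))_m. Then for every r ≥ 1, the loss matrix satisfies the matrix 1-norm bound ‖L_{2,r}(Ω̃^{(·)}, Ω^{(·)})‖_1 ≤ s_1 (2λ_1)^r + s_2 (2λ_1 + 2λ_2)^r. -/
open Matrix Finset

lemma weighted_l2_triangle' {M : ℕ} (c : Fin M → ℝ) (hc : ∀ m, 0 ≤ c m)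
    (x y : Fin M → ℝ) :
    Real.sqrt (∑ m, c m * (x m + y m) ^ 2) ≤
      Real.sqrt (∑ m, c m * x m ^ 2) + Real.sqrt (∑ m, c m * y m ^ 2) := by
  have key : ∀ z : Fin M → ℝ,
      Real.sqrt (∑ m, c m * z m ^ 2) =
        ‖(WithLp.equiv 2 (Fin M → ℝ)).symm (fun m => Real.sqrt (c m) * z m)‖ := by
    intro z
    rw [EuclideanSpace.norm_eq]
    congr 1
    refine Finset.sum_congr rfl fun m _ => ?_
    rw [Real.norm_eq_abs, sq_abs]
    show c m * z m ^ 2 = (Real.sqrt (c m) * z m) ^ 2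
    rw [mul_pow, Real.sq_sqrt (hc m)]
  rw [key, key, key]
  have h : (WithLp.equiv 2 (Fin M → ℝ)).symm (fun m => Real.sqrt (c m) * (x m + y m)) =
      (WithLp.equiv 2 (Fin M → ℝ)).symm (fun m => Real.sqrt (c m) * x m) +
      (WithLp.equiv 2 (Fin M → ℝ)).symm (fun m => Real.sqrt (c m) * y m) := by
    rw [WithLp.equiv_symm_apply, ← WithLp.toLp_add]
    congr 1
    funext m
    simp only [Pi.add_apply]
    ring
  rw [h]
  exact norm_add_le _ _

/-- Deterministic HEAT error bound under the matrix 1-norm. Given the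
heterogeneity decomposition `Ω⁽ᵐ⁾ = Γ + Λ⁽ᵐ⁾`, column-wise sparsity `|S_{1,k}| ≤ s₁`,
`|S_{2,k}| ≤ s₂`, deviation bounds `|Ω̄_{j,k} - Γ_{j,k}| ≤ λ₁` and
`‖Ω̄⁽·⁾_{j,k} - Ω̄_{j,k}1_M - Λ⁽·⁾_{j,k}‖_{2,w} ≤ λ₂`, and thresholding functions
`T₁, T₂` satisfying the univariate/multivariate thresholding conditions, the HEAT
estimator `Ω̃⁽ᵐ⁾_{j,k} = T₁(Ω̄_{j,k}) + (T₂(Ω̄⁽·⁾_{j,k} - Ω̄_{j,k}1_M))_m` satisfies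
`‖L_{2,r}(Ω̃⁽·⁾, Ω⁽·⁾)‖₁ ≤ s₁(2λ₁)ʳ + s₂(2λ₁ + 2λ₂)ʳ` for every `r ≥ 1`. -/
theorem stmt_13 {M p : ℕ} (Ω : Fin M → Matrix (Fin p) (Fin p) ℝ)
    (n : Fin M → ℝ) (hn : ∀ m, 0 < n m)
    (s1 s2 : ℕ) (r : ℝ) (hr : 1 ≤ r)
    (Obar : Fin M → Matrix (Fin p) (Fin p) ℝ)
    (lam1 lam2 : ℝ) (hlam1 : 0 ≤ lam1) (hlam2 : 0 ≤ lam2)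
    (T1 : ℝ → ℝ) (T2 : (Fin M → ℝ) → (Fin M → ℝ)) :
    let N : ℝ := ∑ m, n m
    let w2 : (Fin M → ℝ) → ℝ := fun a => Real.sqrt ((1 / N) * ∑ m, n m * (a m) ^ 2)
    let Γ : Matrix (Fin p) (Fin p) ℝ := (1 / N) • ∑ m, n m • Ω m
    let Λ : Fin M → Matrix (Fin p) (Fin p) ℝ := fun m => Ω m - Γ
    let Obarw : Matrix (Fin p) (Fin p) ℝ := (1 / N) • ∑ m, n m • Obar m
    (∀ k, {j | (∀ m m', Ω m j k = Ω m' j k) ∧ ∃ m, Ω m j k ≠ 0}.ncard ≤ s1) →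
    (∀ k, {j | ¬ ∀ m m', Ω m j k = Ω m' j k}.ncard ≤ s2) →
    (∀ j k, |Obarw j k - Γ j k| ≤ lam1) →
    (∀ j k, w2 (fun m => Obar m j k - Obarw j k - Λ m j k) ≤ lam2) →
    (∀ x, |x| ≤ lam1 → T1 x = 0) → (∀ x, |T1 x - x| ≤ lam1) →
    (∀ x, w2 x ≤ lam2 → T2 x = 0) → (∀ x, w2 (T2 x - x) ≤ lam2) →
    let Otil : Fin M → Matrix (Fin p) (Fin p) ℝ := fun m j k =>
      T1 (Obarw j k) + T2 (fun m' => Obar m' j k - Obarw j k) m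
    (⨆ k, ∑ j, |(w2 (fun m => Otil m j k - Ω m j k)) ^ r|)
      ≤ s1 * (2 * lam1) ^ r + s2 * (2 * lam1 + 2 * lam2) ^ r := by
  intro N w2 Γ Λ Obarw hS1 hS2 hdev1 hdev2 hT1z hT1d hT2z hT2d Otil
  classical
  have hr0 : (0:ℝ) ≤ r := le_trans zero_le_one hr
  have hrne : r ≠ 0 := (lt_of_lt_of_le one_pos hr).ne'
  have hRHS : (0:ℝ) ≤ s1 * (2 * lam1) ^ r + s2 * (2 * lam1 + 2 * lam2) ^ r := by
    have h1 : (0:ℝ) ≤ (2 * lam1) ^ r := Real.rpow_nonneg (by linarith) r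
    have h2 : (0:ℝ) ≤ (2 * lam1 + 2 * lam2) ^ r := Real.rpow_nonneg (by linarith) r
    positivity
  have hw2def : ∀ a : Fin M → ℝ, w2 a = Real.sqrt ((1 / N) * ∑ m, n m * (a m) ^ 2) :=
    fun a => rfl
  rcases Nat.eq_zero_or_pos M with hM | hM
  · -- M = 0: everything is trivially zero
    subst hM
    have he : ∀ a : Fin 0 → ℝ, w2 a = 0 := by
      intro a
      rw [hw2def]
      simp
    refine Real.iSup_le (fun k => ?_) hRHS
    simp only [he, Real.zero_rpow hrne, abs_zero]
    simpa using hRHS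
  · -- main case
    haveI : Nonempty (Fin M) := ⟨⟨0, hM⟩⟩
    have hNpos : 0 < N := Finset.sum_pos (fun m _ => hn m) Finset.univ_nonempty
    have hNne : N ≠ 0 := ne_of_gt hNpos
    -- w2 basics
    have hw2_nonneg : ∀ a, 0 ≤ w2 a := fun a => Real.sqrt_nonneg _
    have hkey : ∀ a : Fin M → ℝ, w2 a = Real.sqrt (∑ m, (n m / N) * (a m) ^ 2) := by
      intro a
      rw [hw2def]
      congr 1
      rw [Finset.mul_sum]
      exact Finset.sum_congr rfl fun m _ => by ring
    have hw2_add : ∀ x y : Fin M → ℝ, w2 (fun m => x m + y m) ≤ w2 x + w2 y := by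
      intro x y
      rw [hkey, hkey, hkey]
      exact weighted_l2_triangle' (fun m => n m / N) (fun m => div_nonneg (hn m).le hNpos.le) x y
    have hw2_const : ∀ t : ℝ, w2 (fun _ => t) = |t| := by
      intro t
      rw [hw2def]
      have : (1 / N) * ∑ m : Fin M, n m * t ^ 2 = t ^ 2 := by
        rw [← Finset.sum_mul]
        field_simp
        rfl
      rw [this, Real.sqrt_sq_eq_abs]
    -- entrywise formulas
    have hΓ : ∀ j k, Γ j k = (1 / N) * ∑ m, n m * Ω m j k := by
      intro j k
      show ((1 / N) • ∑ m, n m • Ω m) j k = _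
      simp [Matrix.sum_apply]
    have hΛ : ∀ m j k, Λ m j k = Ω m j k - Γ j k := fun m j k => rfl
    have hOtil : ∀ m j k, Otil m j k =
        T1 (Obarw j k) + T2 (fun m' => Obar m' j k - Obarw j k) m := fun m j k => rfl
    -- if all entries equal, Γ equals the common value
    have hΓeq : ∀ j k, (∀ m m', Ω m j k = Ω m' j k) → ∀ m0, Γ j k = Ω m0 j k := by
      intro j k heq m0
      rw [hΓ]
      have : ∀ m ∈ Finset.univ, n m * Ω m j k = n m * Ω m0 j k := by
        intro m _; rw [heq m m0]
      rw [Finset.sum_congr rfl this, ← Finset.sum_mul]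
      field_simp
      rfl
    refine Real.iSup_le (fun k => ?_) hRHS
    set E : Fin p → ℝ := fun j => w2 (fun m => Otil m j k - Ω m j k) with hE
    have hE_nonneg : ∀ j, 0 ≤ E j := fun j => hw2_nonneg _
    -- general bound: E j ≤ 2 lam1 + 2 lam2
    have hbound2 : ∀ j, E j ≤ 2 * lam1 + 2 * lam2 := by
      intro j
      set D : Fin M → ℝ := fun m' => Obar m' j k - Obarw j k with hD
      have hsplit : (fun m => Otil m j k - Ω m j k) =
          (fun m => (T1 (Obarw j k) - Γ j k) + (T2 D m - Λ m j k)) := by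
        funext m
        rw [hOtil, hΛ]
        ring
      have h1 : E j ≤ w2 (fun _ => T1 (Obarw j k) - Γ j k) + w2 (fun m => T2 D m - Λ m j k) := by
        rw [hE]
        simp only []
        rw [hsplit]
        exact hw2_add _ _
      have h2 : w2 (fun _ => T1 (Obarw j k) - Γ j k) ≤ 2 * lam1 := by
        rw [hw2_const]
        have : T1 (Obarw j k) - Γ j k =
            (T1 (Obarw j k) - Obarw j k) + (Obarw j k - Γ j k) := by ring
        rw [this]
        calc |(T1 (Obarw j k) - Obarw j k) + (Obarw j k - Γ j k)|
            ≤ |T1 (Obarw j k) - Obarw j k| + |Obarw j k - Γ j k| := abs_add_le _ _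
          _ ≤ lam1 + lam1 := add_le_add (hT1d _) (hdev1 j k)
          _ = 2 * lam1 := by ring
      have h3 : w2 (fun m => T2 D m - Λ m j k) ≤ 2 * lam2 := by
        have hsplit2 : (fun m => T2 D m - Λ m j k) =
            (fun m => (T2 D m - D m) + (D m - Λ m j k)) := by
          funext m; ring
        rw [hsplit2]
        have hA : w2 (fun m => T2 D m - D m) ≤ lam2 := hT2d D
        have hB : w2 (fun m => D m - Λ m j k) ≤ lam2 := hdev2 j k
        calc w2 (fun m => (T2 D m - D m) + (D m - Λ m j k))
            ≤ w2 (fun m => T2 D m - D m) + w2 (fun m => D m - Λ m j k) := hw2_add _ _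
          _ ≤ lam2 + lam2 := add_le_add hA hB
          _ = 2 * lam2 := by ring
      calc E j ≤ _ := h1
        _ ≤ 2 * lam1 + 2 * lam2 := add_le_add h2 h3
    -- all-equal rows: T2 vanishes
    have hT2van : ∀ j, (∀ m m', Ω m j k = Ω m' j k) →
        T2 (fun m' => Obar m' j k - Obarw j k) = 0 := by
      intro j heq
      apply hT2z
      have hΛ0 : ∀ m, Λ m j k = 0 := by
        intro m
        rw [hΛ, hΓeq j k heq m, sub_self]
      have : (fun m' => Obar m' j k - Obarw j k) =
          (fun m => Obar m j k - Obarw j k - Λ m j k) := by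
        funext m; rw [hΛ0 m]; ring
      rw [this]
      exact hdev2 j k
    -- S1 bound
    have hbound1 : ∀ j, (∀ m m', Ω m j k = Ω m' j k) → E j ≤ 2 * lam1 := by
      intro j heq
      have hcv : (fun m => Otil m j k - Ω m j k) = (fun _ => T1 (Obarw j k) - Γ j k) := by
        funext m
        rw [hOtil, hT2van j heq]
        have : Ω m j k = Γ j k := (hΓeq j k heq m).symm
        simp [this]
      rw [hE]
      simp only []
      rw [hcv, hw2_const]
      have hsum : T1 (Obarw j k) - Γ j k =
          (T1 (Obarw j k) - Obarw j k) + (Obarw j k - Γ j k) := by ring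
      rw [hsum]
      calc |(T1 (Obarw j k) - Obarw j k) + (Obarw j k - Γ j k)|
          ≤ |T1 (Obarw j k) - Obarw j k| + |Obarw j k - Γ j k| := abs_add_le _ _
        _ ≤ lam1 + lam1 := add_le_add (hT1d _) (hdev1 j k)
        _ = 2 * lam1 := by ring
    -- zero rows
    have hbound0 : ∀ j, (∀ m m', Ω m j k = Ω m' j k) → (∀ m, Ω m j k = 0) → E j = 0 := by
      intro j heq hz
      have hΓ0 : Γ j k = 0 := by rw [hΓeq j k heq ⟨0, hM⟩, hz]
      have hT1van : T1 (Obarw j k) = 0 := by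
        apply hT1z
        have := hdev1 j k
        rwa [hΓ0, sub_zero] at this
      have hcv : (fun m => Otil m j k - Ω m j k) = (fun _ => (0:ℝ)) := by
        funext m
        rw [hOtil, hT2van j heq, hT1van, hz m]
        simp
      rw [hE]
      simp only []
      rw [hcv, hw2_const, abs_zero]
    -- counting
    set A : Finset (Fin p) := Finset.univ.filter
      (fun j => (∀ m m', Ω m j k = Ω m' j k) ∧ ∃ m, Ω m j k ≠ 0) with hA
    set B : Finset (Fin p) := Finset.univ.filter
      (fun j => ¬ ∀ m m', Ω m j k = Ω m' j k) with hB
    have hcardA : (A.card : ℝ) ≤ s1 := by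
      have hs : {j | (∀ m m', Ω m j k = Ω m' j k) ∧ ∃ m, Ω m j k ≠ 0} = ↑A := by
        ext j; simp [hA]
      have := hS1 k
      rw [hs, Set.ncard_coe_finset] at this
      exact_mod_cast this
    have hcardB : (B.card : ℝ) ≤ s2 := by
      have hs : {j | ¬ ∀ m m', Ω m j k = Ω m' j k} = ↑B := by
        ext j; simp [hB]
      have := hS2 k
      rw [hs, Set.ncard_coe_finset] at this
      exact_mod_cast this
    have habs : ∀ j, |E j ^ r| = E j ^ r := fun j =>
      abs_of_nonneg (Real.rpow_nonneg (hE_nonneg j) r)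
    have hstep : ∀ j, E j ^ r ≤
        (if j ∈ B then (2 * lam1 + 2 * lam2) ^ r else 0) +
        (if j ∈ A then (2 * lam1) ^ r else 0) := by
      intro j
      by_cases hjB : j ∈ B
      · have h1 : E j ^ r ≤ (2 * lam1 + 2 * lam2) ^ r :=
          Real.rpow_le_rpow (hE_nonneg j) (hbound2 j) hr0
        have h2 : (0:ℝ) ≤ (if j ∈ A then (2 * lam1) ^ r else 0) := by
          split
          · exact Real.rpow_nonneg (by linarith) r
          · exact le_refl 0
        simp only [if_pos hjB]
        linarith
      · have heq : ∀ m m', Ω m j k = Ω m' j k := by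
          by_contra hc
          apply hjB
          simp only [hB, Finset.mem_filter, Finset.mem_univ, true_and]
          exact hc
        by_cases hjA : j ∈ A
        · have h1 : E j ^ r ≤ (2 * lam1) ^ r :=
            Real.rpow_le_rpow (hE_nonneg j) (hbound1 j heq) hr0
          simp only [if_neg hjB, if_pos hjA, zero_add]
          exact h1
        · have hz : ∀ m, Ω m j k = 0 := by
            by_contra hc
            push_neg at hc
            apply hjA
            simp only [hA, Finset.mem_filter, Finset.mem_univ, true_and]
            exact ⟨heq, hc⟩
          have : E j = 0 := hbound0 j heq hz
          rw [this, Real.zero_rpow hrne]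
          simp only [if_neg hjB, if_neg hjA]
          norm_num
    show ∑ j, |E j ^ r| ≤ (s1:ℝ) * (2 * lam1) ^ r + (s2:ℝ) * (2 * lam1 + 2 * lam2) ^ r
    calc ∑ j, |E j ^ r| = ∑ j, E j ^ r := Finset.sum_congr rfl fun j _ => habs j
      _ ≤ ∑ j, ((if j ∈ B then (2 * lam1 + 2 * lam2) ^ r else 0) +
            (if j ∈ A then (2 * lam1) ^ r else 0)) :=
          Finset.sum_le_sum fun j _ => hstep j
      _ = (B.card : ℝ) * (2 * lam1 + 2 * lam2) ^ r + (A.card : ℝ) * (2 * lam1) ^ r := by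
          rw [Finset.sum_add_distrib]
          congr 1
          · rw [Finset.sum_ite_mem, Finset.univ_inter, Finset.sum_const, nsmul_eq_mul]
          · rw [Finset.sum_ite_mem, Finset.univ_inter, Finset.sum_const, nsmul_eq_mul]
      _ ≤ s1 * (2 * lam1) ^ r + s2 * (2 * lam1 + 2 * lam2) ^ r := by
          have h1 : (0:ℝ) ≤ (2 * lam1) ^ r := Real.rpow_nonneg (by linarith) r
          have h2 : (0:ℝ) ≤ (2 * lam1 + 2 * lam2) ^ r := Real.rpow_nonneg (by linarith) r
          nlinarith [hcardA, hcardB]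
end

section
/- Under the same setup as the deterministic HEAT error bound — namely: Ω^{(1)},…,Ω^{(M)} real p×p matrices, n_1,…,n_M > 0 with N = Σ_m n_m, Γ = (1/N)Σ_m n_m Ω^{(m)}, Λ^{(m)} = Ω^{(m)} − Γ, sparsity |S_{1,k}| ≤ s_1 and |S_{2,k}| ≤ s_2 for all k where S_{1,k} = {j : Ω^{(1)}_{j,k} = ⋯ = Ω^{(M)}_{j,k} ≠ 0} and S_{2,k} = {j : not all of Ω^{(1)}_{j,k},…,Ω^{(M)}_{j,k} are equal}, matrices Ω̄^{(m)} with Ω̄ = (1/N)Σ_m n_m Ω̄^{(m)} satisfying |Ω̄_{j,k} − Γ_{j,k}| ≤ λ_1 and ‖Ω̄^{(·)}_{j,k} − Ω̄_{j,k}·1_M − Λ^{(·)}_{j,k}‖_{2,w} ≤ λ_2 for all j,k, and Ω̃^{(m)}_{j,k} = T_{1,λ_1}(Ω̄_{j,k}) + (T_{2,λ_2}(Ω̄^{(·)}_{j,k} − Ω̄_{j,k}·1_M))_m with T_{1,λ_1} satisfying the univariate thresholding conditions and T_{2,λ_2} satisfying the multivariate thresholding conditions with respect to ‖·‖_{2,w}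 — for every r ≥ 1 the squared Frobenius norm of the loss matrix satisfies (1/p)·‖L_{2,r}(Ω̃^{(·)}, Ω^{(·)})‖_F² ≤ s_1 (2λ_1)^{2r} + s_2 (2λ_1 + 2λ_2)^{2r}. -/
open Matrix Finset

set_option maxHeartbeats 1000000 in
lemma aux_tri {M : ℕ} (c : ℝ) (hc : 0 ≤ c) (n : Fin M → ℝ) (hn : ∀ m, 0 ≤ n m)
    (a b : Fin M → ℝ) :
    Real.sqrt (c * ∑ m, n m * (a m + b m) ^ 2) ≤
      Real.sqrt (c * ∑ m, n m * (a m) ^ 2) + Real.sqrt (c * ∑ m, n m * (b m) ^ 2) := by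
  have hX0 : 0 ≤ c * ∑ m, n m * (a m) ^ 2 :=
    mul_nonneg hc (Finset.sum_nonneg fun m _ => mul_nonneg (hn m) (sq_nonneg _))
  have hY0 : 0 ≤ c * ∑ m, n m * (b m) ^ 2 :=
    mul_nonneg hc (Finset.sum_nonneg fun m _ => mul_nonneg (hn m) (sq_nonneg _))
  have key := Real.sum_mul_le_sqrt_mul_sqrt Finset.univ
      (fun m => Real.sqrt (n m) * a m) (fun m => Real.sqrt (n m) * b m)
  have e1 : ∀ m : Fin M, (Real.sqrt (n m) * a m) * (Real.sqrt (n m) * b m)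
      = n m * (a m * b m) := by
    intro m
    have h : Real.sqrt (n m) * Real.sqrt (n m) = n m := Real.mul_self_sqrt (hn m)
    calc (Real.sqrt (n m) * a m) * (Real.sqrt (n m) * b m)
        = (Real.sqrt (n m) * Real.sqrt (n m)) * (a m * b m) := by ring
      _ = n m * (a m * b m) := by rw [h]
  have e2 : ∀ m : Fin M, (Real.sqrt (n m) * a m) ^ 2 = n m * (a m) ^ 2 := by
    intro m
    rw [mul_pow, Real.sq_sqrt (hn m)]
  have e3 : ∀ m : Fin M, (Real.sqrt (n m) * b m) ^ 2 = n m * (b m) ^ 2 := by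
    intro m
    rw [mul_pow, Real.sq_sqrt (hn m)]
  rw [Finset.sum_congr rfl (fun m _ => e1 m), Finset.sum_congr rfl (fun m _ => e2 m),
      Finset.sum_congr rfl (fun m _ => e3 m)] at key
  have hCS : c * ∑ m, n m * (a m * b m) ≤
      Real.sqrt (c * ∑ m, n m * (a m) ^ 2) * Real.sqrt (c * ∑ m, n m * (b m) ^ 2) := by
    calc c * ∑ m, n m * (a m * b m)
        ≤ c * (Real.sqrt (∑ m, n m * (a m) ^ 2) * Real.sqrt (∑ m, n m * (b m) ^ 2)) :=
          mul_le_mul_of_nonneg_left key hc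
      _ = Real.sqrt (c * ∑ m, n m * (a m) ^ 2) * Real.sqrt (c * ∑ m, n m * (b m) ^ 2) := by
          rw [Real.sqrt_mul hc, Real.sqrt_mul hc]
          linear_combination (-(Real.sqrt (∑ m, n m * (a m) ^ 2) *
            Real.sqrt (∑ m, n m * (b m) ^ 2))) * (Real.mul_self_sqrt hc)
  have h1 : ∀ m : Fin M, n m * (a m + b m) ^ 2
      = n m * (a m) ^ 2 + 2 * (n m * (a m * b m)) + n m * (b m) ^ 2 := fun m => by ring
  have expand : c * ∑ m, n m * (a m + b m) ^ 2
      = c * ∑ m, n m * (a m) ^ 2 + 2 * (c * ∑ m, n m * (a m * b m))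
        + c * ∑ m, n m * (b m) ^ 2 := by
    rw [Finset.sum_congr rfl (fun m _ => h1 m), Finset.sum_add_distrib,
      Finset.sum_add_distrib, ← Finset.mul_sum]
    ring
  have hsum_le : c * ∑ m, n m * (a m + b m) ^ 2 ≤
      (Real.sqrt (c * ∑ m, n m * (a m) ^ 2) + Real.sqrt (c * ∑ m, n m * (b m) ^ 2)) ^ 2 := by
    rw [expand, add_sq, Real.sq_sqrt hX0, Real.sq_sqrt hY0]
    linarith [hCS]
  calc Real.sqrt (c * ∑ m, n m * (a m + b m) ^ 2)
      ≤ Real.sqrt ((Real.sqrt (c * ∑ m, n m * (a m) ^ 2)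
          + Real.sqrt (c * ∑ m, n m * (b m) ^ 2)) ^ 2) := Real.sqrt_le_sqrt hsum_le
    _ = Real.sqrt (c * ∑ m, n m * (a m) ^ 2) + Real.sqrt (c * ∑ m, n m * (b m) ^ 2) :=
        Real.sqrt_sq (add_nonneg (Real.sqrt_nonneg _) (Real.sqrt_nonneg _))

lemma rpow_sq_eq (x : ℝ) (hx : 0 ≤ x) (r : ℝ) : (x ^ r) ^ 2 = x ^ (2 * r) := by
  rw [← Real.rpow_natCast (x ^ r) 2, ← Real.rpow_mul hx]
  norm_num [mul_comm]

/-- Deterministic HEAT error bound under the (normalized squared)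
Frobenius norm: under the same setup as the matrix 1-norm bound,
`(1/p)·‖L_{2,r}(Ω̃⁽·⁾, Ω⁽·⁾)‖_F² ≤ s₁(2λ₁)^{2r} + s₂(2λ₁ + 2λ₂)^{2r}` for every `r ≥ 1`. -/
theorem stmt_14 {M p : ℕ} (Ω : Fin M → Matrix (Fin p) (Fin p) ℝ)
    (n : Fin M → ℝ) (hn : ∀ m, 0 < n m)
    (s1 s2 : ℕ) (r : ℝ) (hr : 1 ≤ r)
    (Obar : Fin M → Matrix (Fin p) (Fin p) ℝ)
    (lam1 lam2 : ℝ) (hlam1 : 0 ≤ lam1) (hlam2 : 0 ≤ lam2)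
    (T1 : ℝ → ℝ) (T2 : (Fin M → ℝ) → (Fin M → ℝ)) :
    let N : ℝ := ∑ m, n m
    let w2 : (Fin M → ℝ) → ℝ := fun a => Real.sqrt ((1 / N) * ∑ m, n m * (a m) ^ 2)
    let Γ : Matrix (Fin p) (Fin p) ℝ := (1 / N) • ∑ m, n m • Ω m
    let Λ : Fin M → Matrix (Fin p) (Fin p) ℝ := fun m => Ω m - Γ
    let Obarw : Matrix (Fin p) (Fin p) ℝ := (1 / N) • ∑ m, n m • Obar m
    (∀ k, {j | (∀ m m', Ω m j k = Ω m' j k) ∧ ∃ m, Ω m j k ≠ 0}.ncard ≤ s1) →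
    (∀ k, {j | ¬ ∀ m m', Ω m j k = Ω m' j k}.ncard ≤ s2) →
    (∀ j k, |Obarw j k - Γ j k| ≤ lam1) →
    (∀ j k, w2 (fun m => Obar m j k - Obarw j k - Λ m j k) ≤ lam2) →
    (∀ x, |x| ≤ lam1 → T1 x = 0) → (∀ x, |T1 x - x| ≤ lam1) →
    (∀ x, w2 x ≤ lam2 → T2 x = 0) → (∀ x, w2 (T2 x - x) ≤ lam2) →
    let Otil : Fin M → Matrix (Fin p) (Fin p) ℝ := fun m j k =>
      T1 (Obarw j k) + T2 (fun m' => Obar m' j k - Obarw j k) m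
    (1 / (p : ℝ)) * ∑ j, ∑ k, ((w2 (fun m => Otil m j k - Ω m j k)) ^ r) ^ 2
      ≤ s1 * (2 * lam1) ^ (2 * r) + s2 * (2 * lam1 + 2 * lam2) ^ (2 * r) := by
  intro N w2 Γ Λ Obarw hS1 hS2 hbar1 hbar2 hT1z hT1b hT2z hT2b Otil
  classical
  have hr0 : r ≠ 0 := by linarith
  have hr2 : (0:ℝ) ≤ 2 * r := by linarith
  have hRHS0 : 0 ≤ (s1 : ℝ) * (2 * lam1) ^ (2 * r) + s2 * (2 * lam1 + 2 * lam2) ^ (2 * r) := by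
    have h1 : (0:ℝ) ≤ 2 * lam1 := by linarith
    have h2 : (0:ℝ) ≤ 2 * lam1 + 2 * lam2 := by linarith
    have := Real.rpow_nonneg h1 (2 * r)
    have := Real.rpow_nonneg h2 (2 * r)
    positivity
  have hw2def : ∀ a : Fin M → ℝ,
      w2 a = Real.sqrt ((1 / N) * ∑ m, n m * (a m) ^ 2) := fun a => rfl
  rcases Nat.eq_zero_or_pos M with hM | hM
  · subst hM
    have hz : ∀ j k : Fin p, ((w2 (fun m => Otil m j k - Ω m j k)) ^ r) ^ 2 = 0 := by
      intro j k
      rw [hw2def]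
      simp [Real.zero_rpow hr0]
    simp only [hz, Finset.sum_const_zero, mul_zero]
    exact hRHS0
  -- main case : M ≥ 1
  have hNpos : (0:ℝ) < N := Finset.sum_pos (fun m _ => hn m) ⟨⟨0, hM⟩, Finset.mem_univ _⟩
  have hN0 : N ≠ 0 := ne_of_gt hNpos
  have hinv0 : (0:ℝ) ≤ 1 / N := by positivity
  have hΓ : ∀ j k, Γ j k = (1 / N) * ∑ m, n m * Ω m j k := by
    intro j k
    show ((1 / N) • ∑ m, n m • Ω m) j k = _
    simp [Matrix.sum_apply]
  have hΛ : ∀ m j k, Λ m j k = Ω m j k - Γ j k := fun m j k => rfl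
  have hw2nonneg : ∀ a : Fin M → ℝ, 0 ≤ w2 a := fun a => Real.sqrt_nonneg _
  have hw2tri : ∀ a b : Fin M → ℝ, w2 (fun m => a m + b m) ≤ w2 a + w2 b := by
    intro a b
    rw [hw2def, hw2def, hw2def]
    exact aux_tri (1 / N) hinv0 n (fun m => (hn m).le) a b
  have hw2const : ∀ c : ℝ, w2 (fun _ => c) = |c| := by
    intro c
    rw [hw2def]
    have : ∑ m : Fin M, n m * c ^ 2 = N * c ^ 2 :=
      (Finset.sum_mul Finset.univ n (c ^ 2)).symm
    rw [this, ← mul_assoc, one_div_mul_cancel hN0, one_mul, Real.sqrt_sq_eq_abs]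
  -- pointwise bounds
  set B1 : ℝ := 2 * lam1 with hB1def
  set B2 : ℝ := 2 * lam1 + 2 * lam2 with hB2def
  have hB1nn : 0 ≤ B1 := by rw [hB1def]; linarith
  have hB2nn : 0 ≤ B2 := by rw [hB2def]; linarith
  have hcbound : ∀ j k, |T1 (Obarw j k) - Γ j k| ≤ B1 := by
    intro j k
    have h1 := hT1b (Obarw j k)
    have h2 := hbar1 j k
    calc |T1 (Obarw j k) - Γ j k|
        = |(T1 (Obarw j k) - Obarw j k) + (Obarw j k - Γ j k)| := by ring_nf
      _ ≤ |T1 (Obarw j k) - Obarw j k| + |Obarw j k - Γ j k| := abs_add_le _ _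
      _ ≤ B1 := by rw [hB1def]; linarith
  -- the key per-entry decomposition
  have hdiff : ∀ m (j k : Fin p), Otil m j k - Ω m j k
      = (T1 (Obarw j k) - Γ j k) +
        (T2 (fun m' => Obar m' j k - Obarw j k) m - Λ m j k) := by
    intro m j k
    rw [hΛ]
    show T1 (Obarw j k) + T2 (fun m' => Obar m' j k - Obarw j k) m - Ω m j k = _
    ring
  -- general bound 2λ1 + 2λ2
  have hgen : ∀ j k, w2 (fun m => Otil m j k - Ω m j k) ≤ B2 := by
    intro j k
    set y : Fin M → ℝ := fun m' => Obar m' j k - Obarw j k with hy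
    have step1 : w2 (fun m => Otil m j k - Ω m j k)
        ≤ w2 (fun _ => T1 (Obarw j k) - Γ j k) + w2 (fun m => T2 y m - Λ m j k) := by
      have := hw2tri (fun _ => T1 (Obarw j k) - Γ j k) (fun m => T2 y m - Λ m j k)
      have heq0 : (fun m => (T1 (Obarw j k) - Γ j k) + (T2 y m - Λ m j k))
          = (fun m => Otil m j k - Ω m j k) := by
        funext m; exact (hdiff m j k).symm
      rw [heq0] at this
      exact this
    have step2 : w2 (fun m => T2 y m - Λ m j k)
        ≤ w2 (fun m => T2 y m - y m) + w2 (fun m => y m - Λ m j k) := by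
      have := hw2tri (fun m => T2 y m - y m) (fun m => y m - Λ m j k)
      have heq : (fun m => (T2 y m - y m) + (y m - Λ m j k))
          = (fun m => T2 y m - Λ m j k) := by funext m; ring
      rw [heq] at this
      exact this
    have h3 : w2 (fun m => T2 y m - y m) ≤ lam2 := hT2b y
    have h4 : w2 (fun m => y m - Λ m j k) ≤ lam2 := hbar2 j k
    have h5 : w2 (fun _ => T1 (Obarw j k) - Γ j k) ≤ B1 := by
      rw [hw2const]; exact hcbound j k
    rw [hB2def]
    calc w2 (fun m => Otil m j k - Ω m j k)
        ≤ w2 (fun _ => T1 (Obarw j k) - Γ j k) + w2 (fun m => T2 y m - Λ m j k) := step1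
      _ ≤ B1 + (w2 (fun m => T2 y m - y m) + w2 (fun m => y m - Λ m j k)) := by
          exact add_le_add h5 step2
      _ ≤ 2 * lam1 + 2 * lam2 := by rw [hB1def] at *; linarith
  -- if all entries agree, Λ vanishes and T2 is killed
  have hLamzero : ∀ j k, (∀ m m', Ω m j k = Ω m' j k) → ∀ m, Λ m j k = 0 := by
    intro j k heq m
    rw [hΛ, hΓ]
    have : ∑ m', n m' * Ω m' j k = N * Ω m j k := by
      calc ∑ m', n m' * Ω m' j k = ∑ m', n m' * Ω m j k :=
            Finset.sum_congr rfl (fun m' _ => by rw [heq m' m])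
        _ = N * Ω m j k := (Finset.sum_mul Finset.univ n (Ω m j k)).symm
    rw [this, ← mul_assoc, one_div_mul_cancel hN0, one_mul]
    ring
  have hT2kill : ∀ j k, (∀ m, Λ m j k = 0) →
      T2 (fun m' => Obar m' j k - Obarw j k) = 0 := by
    intro j k hz
    apply hT2z
    have := hbar2 j k
    simp only [hz, sub_zero] at this
    exact this
  -- bound on S1
  have hS1bound : ∀ j k, (∀ m m', Ω m j k = Ω m' j k) →
      w2 (fun m => Otil m j k - Ω m j k) ≤ B1 := by
    intro j k heq
    have hz := hLamzero j k heq
    have hk := hT2kill j k hz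
    have hdiff' : (fun m => Otil m j k - Ω m j k) = (fun _ => T1 (Obarw j k) - Γ j k) := by
      funext m
      rw [hdiff, hz m, hk]
      simp
    rw [hdiff', hw2const]
    exact hcbound j k
  -- zero outside S1 ∪ S2
  have hzero : ∀ j k, (∀ m m', Ω m j k = Ω m' j k) → (¬ ∃ m, Ω m j k ≠ 0) →
      w2 (fun m => Otil m j k - Ω m j k) = 0 := by
    intro j k heq hnz
    push_neg at hnz
    have hΓ0 : Γ j k = 0 := by
      rw [hΓ]
      have : ∑ m, n m * Ω m j k = 0 :=
        Finset.sum_eq_zero (fun m _ => by rw [hnz m]; ring)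
      rw [this]; ring
    have hz := hLamzero j k heq
    have hk := hT2kill j k hz
    have hT10 : T1 (Obarw j k) = 0 := by
      apply hT1z
      have := hbar1 j k
      rwa [hΓ0, sub_zero] at this
    have hdiff' : (fun m => Otil m j k - Ω m j k) = (fun _ : Fin M => (0:ℝ)) := by
      funext m
      rw [hdiff, hz m, hk, hT10, hΓ0]
      simp
    rw [hdiff', hw2const, abs_zero]
  -- per-column sums
  set F : Fin p → Fin p → ℝ :=
    fun j k => ((w2 (fun m => Otil m j k - Ω m j k)) ^ r) ^ 2 with hF
  have hcol : ∀ k, ∑ j, F j k ≤ s1 * B1 ^ (2 * r) + s2 * B2 ^ (2 * r) := by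
    intro k
    set P1 : Fin p → Prop := fun j => (∀ m m', Ω m j k = Ω m' j k) ∧ ∃ m, Ω m j k ≠ 0 with hP1
    set P2 : Fin p → Prop := fun j => ¬ ∀ m m', Ω m j k = Ω m' j k with hP2
    set S1f : Finset (Fin p) := Finset.univ.filter P1 with hS1f
    set S2f : Finset (Fin p) := Finset.univ.filter P2 with hS2f
    have hcard1 : S1f.card ≤ s1 := by
      have h := hS1 k
      have : {j | P1 j} = ↑S1f := by
        rw [hS1f]; ext j; simp [P1]
      rwa [this, Set.ncard_coe_finset] at h
    have hcard2 : S2f.card ≤ s2 := by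
      have h := hS2 k
      have : {j | P2 j} = ↑S2f := by
        rw [hS2f]; ext j; simp [P2]
      rwa [this, Set.ncard_coe_finset] at h
    have hdisj : Disjoint S1f S2f := by
      rw [Finset.disjoint_left]
      intro j hj1 hj2
      rw [hS1f, Finset.mem_filter] at hj1
      rw [hS2f, Finset.mem_filter] at hj2
      exact hj2.2 hj1.2.1
    have hFnn : ∀ j, 0 ≤ w2 (fun m => Otil m j k - Ω m j k) := fun j => hw2nonneg _
    have hFle : ∀ (j : Fin p) (b : ℝ), 0 ≤ b →
        w2 (fun m => Otil m j k - Ω m j k) ≤ b → F j k ≤ b ^ (2 * r) := by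
      intro j b hb hle
      simp only [hF]
      rw [rpow_sq_eq _ (hFnn j)]
      exact Real.rpow_le_rpow (hFnn j) hle hr2
    have houtside : ∀ j ∈ Finset.univ, j ∉ S1f ∪ S2f → F j k = 0 := by
      intro j _ hj
      rw [Finset.mem_union] at hj
      push_neg at hj
      have h1 : ¬ P1 j := fun h => hj.1 (by
        rw [hS1f]; exact Finset.mem_filter.mpr ⟨Finset.mem_univ j, h⟩)
      have h2 : ¬ P2 j := fun h => hj.2 (by
        rw [hS2f]; exact Finset.mem_filter.mpr ⟨Finset.mem_univ j, h⟩)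
      have heq : ∀ m m', Ω m j k = Ω m' j k := not_not.mp h2
      have hnz : ¬ ∃ m, Ω m j k ≠ 0 := fun hex => h1 ⟨heq, hex⟩
      simp only [hF]
      rw [hzero j k heq hnz, Real.zero_rpow hr0]
      ring
    have hsum_eq : ∑ j, F j k = ∑ j ∈ S1f ∪ S2f, F j k :=
      (Finset.sum_subset (Finset.subset_univ _)
        (fun j hj hnj => houtside j hj hnj)).symm
    have hb1 : ∑ j ∈ S1f, F j k ≤ (S1f.card : ℝ) * B1 ^ (2 * r) := by
      have := Finset.sum_le_card_nsmul S1f (fun j => F j k) (B1 ^ (2 * r)) ?_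
      · simpa [nsmul_eq_mul] using this
      · intro j hj
        rw [hS1f, Finset.mem_filter] at hj
        exact hFle j B1 hB1nn (hS1bound j k hj.2.1)
    have hb2 : ∑ j ∈ S2f, F j k ≤ (S2f.card : ℝ) * B2 ^ (2 * r) := by
      have := Finset.sum_le_card_nsmul S2f (fun j => F j k) (B2 ^ (2 * r)) ?_
      · simpa [nsmul_eq_mul] using this
      · intro j hj
        exact hFle j B2 hB2nn (hgen j k)
    have hx1 : (0:ℝ) ≤ B1 ^ (2 * r) := Real.rpow_nonneg hB1nn _
    have hx2 : (0:ℝ) ≤ B2 ^ (2 * r) := Real.rpow_nonneg hB2nn _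
    calc ∑ j, F j k = ∑ j ∈ S1f ∪ S2f, F j k := hsum_eq
      _ = ∑ j ∈ S1f, F j k + ∑ j ∈ S2f, F j k := Finset.sum_union hdisj
      _ ≤ (S1f.card : ℝ) * B1 ^ (2 * r) + (S2f.card : ℝ) * B2 ^ (2 * r) :=
          add_le_add hb1 hb2
      _ ≤ s1 * B1 ^ (2 * r) + s2 * B2 ^ (2 * r) := by
          apply add_le_add
          · exact mul_le_mul_of_nonneg_right (by exact_mod_cast hcard1) hx1
          · exact mul_le_mul_of_nonneg_right (by exact_mod_cast hcard2) hx2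
  -- conclude
  rcases Nat.eq_zero_or_pos p with hp | hp
  · subst hp
    simp only [Finset.univ_eq_empty, Finset.sum_empty, mul_zero]
    exact hRHS0
  have hppos : (0:ℝ) < p := by exact_mod_cast hp
  have htotal : ∑ j, ∑ k, F j k ≤ (p : ℝ) * (s1 * B1 ^ (2 * r) + s2 * B2 ^ (2 * r)) := by
    rw [Finset.sum_comm]
    calc ∑ k, ∑ j, F j k ≤ ∑ _k : Fin p, (s1 * B1 ^ (2 * r) + s2 * B2 ^ (2 * r)) :=
          Finset.sum_le_sum (fun k _ => hcol k)
      _ = (p : ℝ) * (s1 * B1 ^ (2 * r) + s2 * B2 ^ (2 * r)) := by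
          rw [Finset.sum_const, Finset.card_univ, Fintype.card_fin, nsmul_eq_mul]
  calc (1 / (p : ℝ)) * ∑ j, ∑ k, F j k
      ≤ (1 / (p : ℝ)) * ((p : ℝ) * (s1 * B1 ^ (2 * r) + s2 * B2 ^ (2 * r))) := by
        apply mul_le_mul_of_nonneg_left htotal (by positivity)
    _ = s1 * B1 ^ (2 * r) + s2 * B2 ^ (2 * r) := by
        field_simp
end
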